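/- arXiv:1411.5979 — 3 statements merged into one kernel-verified Lean document; each statement's English description precedes it below -/
import Mathlib

section
/- Let 𝔤 be a finite-dimensional real Lie algebra and D a derivation of 𝔤. Define 𝔤⁺ (resp. 𝔤⁻, 𝔤⁰) as the sum of generalized eigenspaces of D corresponding to eigenvalues with positive (resp. negative, zero) real part. Then 𝔤⁺, 𝔤⁻ and 𝔤⁰ are Lie subalgebras of 𝔤, and 𝔤⁺ and 𝔤⁻ are nilpotent. -/
open TensorProduct

/-- For an `ℝ`-linear endomorphism `D` of a real vector space `V` and a predicate `P` on `ℂ`,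
`spectralSubmodule D P` is the real subspace of `V` consisting of the vectors whose image in
the complexification `ℂ ⊗[ℝ] V` lies in the sum of the generalized eigenspaces of the
complexified endomorphism `D_ℂ` over all eigenvalues `α` satisfying `P α`.  For
`P α = (0 < α.re)` (resp. `α.re < 0`, `α.re = 0`) this is `𝔤⁺` (resp. `𝔤⁻`, `𝔤⁰`). -/
noncomputable def spectralSubmodule {V : Type*} [AddCommGroup V] [Module ℝ V]
    (D : V →ₗ[ℝ] V) (P : ℂ → Prop) : Submodule ℝ V :=
  Submodule.comap ((TensorProduct.mk ℝ ℂ V) 1)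
    (Submodule.restrictScalars ℝ
      (⨆ α ∈ {α : ℂ | P α}, Module.End.maxGenEigenspace (D.baseChange ℂ) α))
/-! Since `D` is a derivation, `(D - (α + β))ⁿ ⁅x, y⁆` expands by the Leibniz rule into brackets
`⁅(D - α)ⁱ x, (D - β)ʲ y⁆`, so the bracket of generalized eigenvectors for `α` and `β` is one for
`α + β`; as the three conditions on the real part are closed under addition, the three sums of
generalized eigenspaces are subalgebras. For nilpotency of `𝔤⁺` (and of `𝔤⁻`, using `-re`):
only finitely many generalized eigenspaces are nonzero, so the real parts of their eigenvalues are
bounded above and the positive ones are at least some `δ > 0`. Bracketing with an element of `𝔤⁺`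
raises the real part by at least `δ`, so `ad x` is nilpotent on `𝔤⁺` and Engel's theorem
applies. -/

open Finset Module.End

lemma Module.End.pow_apply_lie_of_apply_lie {R L : Type*} [CommRing R] [LieRing L]
    [LieAlgebra R L] {A B C : Module.End R L} (h : ∀ a b : L, C ⁅a, b⁆ = ⁅A a, b⁆ + ⁅a, B b⁆)
    (n : ℕ) (a b : L) :
    (C ^ n) ⁅a, b⁆ = ∑ ij ∈ antidiagonal n, n.choose ij.1 • ⁅(A ^ ij.1) a, (B ^ ij.2) b⁆ := by
  induction n with
  | zero => simp
  | succ n ih =>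
    rw [sum_antidiagonal_choose_succ_nsmul (fun i j ↦ ⁅(A ^ i) a, (B ^ j) b⁆) n]
    simp only [pow_succ', Module.End.mul_apply, ih, map_sum, map_nsmul, h, nsmul_add,
      sum_add_distrib]
    rw [add_comm, add_left_cancel_iff]
    refine sum_congr rfl fun ⟨i, j⟩ hij ↦ ?_
    rw [Nat.choose_symm_of_eq_add (mem_antidiagonal.1 hij).symm]

namespace LieDerivation

variable {R L : Type*} [CommRing R] [LieRing L] [LieAlgebra R L]

lemma lie_mem_maxGenEigenspace (D : LieDerivation R L L) {α β : R} {x y : L}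
    (hx : x ∈ maxGenEigenspace (D : Module.End R L) α)
    (hy : y ∈ maxGenEigenspace (D : Module.End R L) β) :
    ⁅x, y⁆ ∈ maxGenEigenspace (D : Module.End R L) (α + β) := by
  rw [mem_maxGenEigenspace] at hx hy ⊢
  obtain ⟨k, hk⟩ := hx
  obtain ⟨l, hl⟩ := hy
  have leibniz (a b : L) : ((D : Module.End R L) - (α + β) • 1) ⁅a, b⁆ =
      ⁅((D : Module.End R L) - α • 1) a, b⁆ + ⁅a, ((D : Module.End R L) - β • 1) b⁆ := by
    simp only [add_smul, LinearMap.sub_apply, coeFn_coe, D.apply_lie_eq_add, LinearMap.add_apply,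
      LinearMap.smul_apply, Module.End.one_apply, sub_lie, smul_lie, lie_sub, lie_smul]
    abel
  refine ⟨k + l, ?_⟩
  rw [pow_apply_lie_of_apply_lie leibniz]
  refine sum_eq_zero fun ⟨i, j⟩ hij => ?_
  rcases le_or_gt k i with hi | hi
  · simp [pow_map_zero_of_le hi hk]
  · have hj : l ≤ j := by linarith [mem_antidiagonal.1 hij]
    simp [pow_map_zero_of_le hj hl]

lemma lie_mem_biSup_maxGenEigenspace (D : LieDerivation R L L) {s t r : Set R}
    (hst : ∀ α ∈ s, ∀ β ∈ t, maxGenEigenspace (D : Module.End R L) α ≠ ⊥ → α + β ∈ r)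
    {x y : L} (hx : x ∈ ⨆ α ∈ s, maxGenEigenspace (D : Module.End R L) α)
    (hy : y ∈ ⨆ β ∈ t, maxGenEigenspace (D : Module.End R L) β) :
    ⁅x, y⁆ ∈ ⨆ γ ∈ r, maxGenEigenspace (D : Module.End R L) γ := by
  suffices Submodule.map₂ (LieAlgebra.ad R L : L →ₗ[R] Module.End R L)
      (⨆ α ∈ s, maxGenEigenspace (D : Module.End R L) α)
      (⨆ β ∈ t, maxGenEigenspace (D : Module.End R L) β) ≤
      ⨆ γ ∈ r, maxGenEigenspace (D : Module.End R L) γ from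
    this (Submodule.apply_mem_map₂ _ hx hy)
  simp only [Submodule.map₂_iSup_left, Submodule.map₂_iSup_right, iSup_le_iff]
  intro β hβ α hα
  rcases eq_or_ne (maxGenEigenspace (D : Module.End R L) α) ⊥ with hbot | hbot
  · simp [hbot]
  · refine le_trans ?_ (le_biSup _ (hst α hα β hβ hbot))
    exact Submodule.map₂_le.2 fun x hx y hy ↦ D.lie_mem_maxGenEigenspace hx hy

variable (A : Type*) [CommRing A] [Algebra R A] in
noncomputable def baseChange (D : LieDerivation R L L) :
    LieDerivation A (A ⊗[R] L) (A ⊗[R] L) where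
  toLinearMap := (D : L →ₗ[R] L).baseChange A
  leibniz' x y := by
    simp only [LinearMap.baseChange_eq_ltensor]
    exact (Lie.Derivation.ofLieDerivation A D).apply_lie_eq_sub x y

section Field

variable {K : Type*} [Field K] [LieAlgebra K L] [FiniteDimensional K L]

lemma exists_ad_pow_apply_eq_zero (D : LieDerivation K L L) (w : K →+ ℝ) :
    ∃ n : ℕ, ∀ x ∈ ⨆ α ∈ {α | 0 < w α}, maxGenEigenspace (D : Module.End K L) α,
      ∀ y ∈ ⨆ α ∈ {α | 0 < w α}, maxGenEigenspace (D : Module.End K L) α,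
        (LieAlgebra.ad K L x ^ n) y = 0 := by
  set E := maxGenEigenspace (D : Module.End K L)
  set F : ℝ → Submodule K L := fun c ↦ ⨆ α ∈ {α | c ≤ w α}, E α
  have hfin : {α | E α ≠ ⊥}.Finite :=
    WellFoundedGT.finite_ne_bot_of_iSupIndep (independent_maxGenEigenspace _)
  obtain ⟨δ, hδ, hδ_pos⟩ : ∃ δ : ℝ, (∀ α ∈ {α | E α ≠ ⊥} ∩ {α | 0 < w α}, δ ≤ w α) ∧ 0 < δ :=
    (((hfin.inter_of_left _).eventually_all.2 fun α hα ↦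
      (eventually_le_nhds hα.2).filter_mono nhdsWithin_le_nhds).and
        (self_mem_nhdsWithin (a := (0 : ℝ)) (s := Set.Ioi 0))).exists
  obtain ⟨C, hC⟩ := (hfin.image w).bddAbove
  obtain ⟨n, hn⟩ := exists_nat_gt (C / δ)
  refine ⟨n, fun x hx y hy ↦ ?_⟩
  have h_level (k : ℕ) : (LieAlgebra.ad K L x ^ k) y ∈ F (k * δ) := by
    induction k with
    | zero => simpa [F] using biSup_mono (f := E) (fun α (hα : 0 < w α) ↦ hα.le) hy
    | succ k ih =>
      rw [pow_succ', Module.End.mul_apply, LieAlgebra.ad_apply]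
      refine D.lie_mem_biSup_maxGenEigenspace (fun α hα β hβ hα_ne ↦ ?_) hx ih
      have := hδ α ⟨hα_ne, hα⟩
      simp only [Set.mem_ofPred_eq, map_add, Nat.cast_succ] at hβ ⊢
      linarith
  have h_top : F (n * δ) = ⊥ := by
    refine iSup₂_eq_bot.2 fun α hα ↦ ?_
    by_contra hα_ne
    have : w α ≤ C := hC ⟨α, hα_ne, rfl⟩
    have := (div_lt_iff₀ hδ_pos).1 hn
    simp only [Set.mem_ofPred_eq] at hα
    linarith
  simpa [h_top] using h_level n

end Field

end LieDerivation

lemma mem_spectralSubmodule_iff {V : Type*} [AddCommGroup V] [Module ℝ V] (D : V →ₗ[ℝ] V)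
    (P : ℂ → Prop) (x : V) :
    x ∈ spectralSubmodule D P ↔
      (1 : ℂ) ⊗ₜ[ℝ] x ∈ ⨆ α ∈ {α | P α}, maxGenEigenspace (D.baseChange ℂ) α :=
  Iff.rfl

section RealLieAlgebra

variable {L : Type*} [LieRing L] [LieAlgebra ℝ L]

lemma lie_mem_spectralSubmodule (D : LieDerivation ℝ L L) {P : ℂ → Prop}
    (hP : ∀ α β, P α → P β → P (α + β)) {x y : L}
    (hx : x ∈ spectralSubmodule (D : L →ₗ[ℝ] L) P)
    (hy : y ∈ spectralSubmodule (D : L →ₗ[ℝ] L) P) :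
    ⁅x, y⁆ ∈ spectralSubmodule (D : L →ₗ[ℝ] L) P := by
  rw [mem_spectralSubmodule_iff] at hx hy ⊢
  rw [← mul_one (1 : ℂ), ← LieAlgebra.ExtendScalars.bracket_tmul]
  exact (D.baseChange ℂ).lie_mem_biSup_maxGenEigenspace (fun α hα β hβ _ ↦ hP α β hα hβ) hx hy

lemma isNilpotent_of_toSubmodule_eq_spectralSubmodule [FiniteDimensional ℝ L]
    (D : LieDerivation ℝ L L) (w : ℂ →+ ℝ) (p : LieSubalgebra ℝ L)
    (hp : p.toSubmodule = spectralSubmodule (D : L →ₗ[ℝ] L) (fun α ↦ 0 < w α)) :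
    LieRing.IsNilpotent p := by
  obtain ⟨n, hn⟩ := (D.baseChange ℂ).exists_ad_pow_apply_eq_zero w
  have hmem (z : p) := (mem_spectralSubmodule_iff _ _ (z : L)).1 (hp ▸ p.mem_toSubmodule.2 z.2)
  rw [LieAlgebra.isNilpotent_iff_forall (R := ℝ)]
  refine fun x ↦ ⟨n, LinearMap.ext fun y ↦ Subtype.ext ?_⟩
  apply Module.Flat.tensorProduct_mk_injective ℝ L ℂ
  have had : LieAlgebra.ad ℂ (ℂ ⊗[ℝ] L) (1 ⊗ₜ (x : L)) = (LieAlgebra.ad ℝ L x).baseChange ℂ :=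
    LieModule.toEnd_baseChange ℝ ℂ L L x
  have := hn _ (hmem x) _ (hmem y)
  rw [had, ← LinearMap.baseChange_pow, LinearMap.baseChange_tmul] at this
  simpa [LieSubalgebra.coe_ad_pow] using this

end RealLieAlgebra

/-- For a derivation `D` of a finite-dimensional real Lie algebra `𝔤`,
the subspaces `𝔤⁺`, `𝔤⁻`, `𝔤⁰` (sums of generalized eigenspaces of `D` with eigenvalue real
part positive, negative, zero) are Lie subalgebras, and `𝔤⁺`, `𝔤⁻` are nilpotent. -/
theorem spectralSubmodule_isLieSubalgebra_and_nilpotent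
    {L : Type*} [LieRing L] [LieAlgebra ℝ L] [FiniteDimensional ℝ L]
    (D : LieDerivation ℝ L L) :
    (∀ x ∈ spectralSubmodule (D : L →ₗ[ℝ] L) (fun α => 0 < α.re),
      ∀ y ∈ spectralSubmodule (D : L →ₗ[ℝ] L) (fun α => 0 < α.re),
        ⁅x, y⁆ ∈ spectralSubmodule (D : L →ₗ[ℝ] L) (fun α => 0 < α.re)) ∧
    (∀ x ∈ spectralSubmodule (D : L →ₗ[ℝ] L) (fun α => α.re < 0),
      ∀ y ∈ spectralSubmodule (D : L →ₗ[ℝ] L) (fun α => α.re < 0),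
        ⁅x, y⁆ ∈ spectralSubmodule (D : L →ₗ[ℝ] L) (fun α => α.re < 0)) ∧
    (∀ x ∈ spectralSubmodule (D : L →ₗ[ℝ] L) (fun α => α.re = 0),
      ∀ y ∈ spectralSubmodule (D : L →ₗ[ℝ] L) (fun α => α.re = 0),
        ⁅x, y⁆ ∈ spectralSubmodule (D : L →ₗ[ℝ] L) (fun α => α.re = 0)) ∧
    (∀ p : LieSubalgebra ℝ L,
      p.toSubmodule = spectralSubmodule (D : L →ₗ[ℝ] L) (fun α => 0 < α.re) →
        LieRing.IsNilpotent p) ∧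
    (∀ p : LieSubalgebra ℝ L,
      p.toSubmodule = spectralSubmodule (D : L →ₗ[ℝ] L) (fun α => α.re < 0) →
        LieRing.IsNilpotent p) := by
  refine ⟨fun x hx y hy ↦ lie_mem_spectralSubmodule D ?_ hx hy,
    fun x hx y hy ↦ lie_mem_spectralSubmodule D ?_ hx hy,
    fun x hx y hy ↦ lie_mem_spectralSubmodule D ?_ hx hy,
    fun p hp ↦ isNilpotent_of_toSubmodule_eq_spectralSubmodule D Complex.reAddGroupHom p hp,
    fun p hp ↦ isNilpotent_of_toSubmodule_eq_spectralSubmodule D (-Complex.reAddGroupHom) p ?_⟩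
  · exact fun α β hα hβ ↦ by rw [Complex.add_re]; linarith
  · exact fun α β hα hβ ↦ by rw [Complex.add_re]; linarith
  · exact fun α β hα hβ ↦ by rw [Complex.add_re, hα, hβ, add_zero]
  · simpa using hp
end

section
/- Let π* : 𝔤 → 𝔥 be a surjective Lie algebra homomorphism between finite-dimensional real Lie algebras, and let D₁, D₂ be derivations of 𝔤 and 𝔥 respectively with π* ∘ D₁ = D₂ ∘ π*. Then π*(𝔤⁺) = 𝔥⁺, π*(𝔤⁻) = 𝔥⁻ and π*(𝔤⁰) = 𝔥⁰. -/
open TensorProduct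

/-!
Complexify. A surjection intertwining `D₁` and `D₂` maps each generalized eigenspace of `D₁_ℂ`
into the generalized eigenspace of `D₂_ℂ` for the same eigenvalue; as the former span the
source and the latter are independent, these inclusions are equalities. To descend to the real
forms: when `P` is invariant under conjugation, the sum of the generalized eigenspaces over
eigenvalues in `P` is stable under complex conjugation of `ℂ ⊗ V`, so the real part of a
preimage of `1 ⊗ w` is a preimage of `w` in the real form.
-/

open Function Module.End

namespace Module.End

lemma apply_mem_maxGenEigenspace_of_semiconj {R S X Y : Type*} [CommRing R] [CommRing S]
    [AddCommGroup X] [Module R X] [AddCommGroup Y] [Module S Y] {σ : R →+* S}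
    (g : X →ₛₗ[σ] Y) {A : End R X} {B : End S Y} (hg : Semiconj g A B) {α : R} {x : X}
    (hx : x ∈ A.maxGenEigenspace α) : g x ∈ B.maxGenEigenspace (σ α) := by
  obtain ⟨k, hk⟩ := (mem_maxGenEigenspace _ _ _).mp hx
  have hsub : Semiconj g (A - α • 1 : End R X) (B - σ α • 1 : End S Y) := fun y => by
    simp [hg.eq y]
  refine (mem_maxGenEigenspace _ _ _).mpr ⟨k, ?_⟩
  rw [pow_apply, ← (hsub.iterate_right k).eq, ← pow_apply, hk, map_zero]

lemma map_maxGenEigenspace_of_semiconj {K X Y : Type*} [Field K] [IsAlgClosed K]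
    [AddCommGroup X] [Module K X] [FiniteDimensional K X] [AddCommGroup Y] [Module K Y]
    (g : X →ₗ[K] Y) (hg : Surjective g) {A : End K X} {B : End K Y} (hAB : Semiconj g A B)
    (α : K) : (A.maxGenEigenspace α).map g = B.maxGenEigenspace α := by
  have hle : ∀ α, (A.maxGenEigenspace α).map g ≤ B.maxGenEigenspace α := fun α =>
    Submodule.map_le_iff_le_comap.mpr fun _ hx => apply_mem_maxGenEigenspace_of_semiconj g hAB hx
  refine congrFun ((B.independent_maxGenEigenspace.le_iff_eq_of_iSup_eq_top ?_).mp hle) α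
  rw [← Submodule.map_iSup, A.iSup_maxGenEigenspace_eq_top, Submodule.map_top,
    LinearMap.range_eq_top.mpr hg]

end Module.End

lemma LinearMap.semiconj_baseChange {R A V W : Type*} [CommRing R] [CommRing A] [Algebra R A]
    [AddCommGroup V] [Module R V] [AddCommGroup W] [Module R W] {f : V →ₗ[R] W}
    {D₁ : V →ₗ[R] V} {D₂ : W →ₗ[R] W} (h : Semiconj f D₁ D₂) :
    Semiconj (f.baseChange A) (D₁.baseChange A) (D₂.baseChange A) := by
  have hcomp : f ∘ₗ D₁ = D₂ ∘ₗ f := LinearMap.ext h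
  intro u
  simpa only [LinearMap.baseChange_comp, LinearMap.comp_apply] using
    LinearMap.congr_fun (congrArg (LinearMap.baseChange A) hcomp) u

namespace Complexification

variable {V W : Type*} [AddCommGroup V] [Module ℝ V] [AddCommGroup W] [Module ℝ W]

noncomputable def re : ℂ ⊗[ℝ] V →ₗ[ℝ] V :=
  TensorProduct.lift ((LinearMap.lsmul ℝ V).comp Complex.reLm)

@[simp]
lemma re_tmul (c : ℂ) (v : V) : re (c ⊗ₜ[ℝ] v) = c.re • v := rfl

lemma re_baseChange (f : V →ₗ[ℝ] W) (u : ℂ ⊗[ℝ] V) :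
    re (f.baseChange ℂ u) = f (re u) := by
  induction u using TensorProduct.induction_on with
  | zero => simp
  | tmul c v => simp
  | add x y hx hy => simp [hx, hy]

noncomputable def conj : ℂ ⊗[ℝ] V →ₛₗ[starRingEnd ℂ] ℂ ⊗[ℝ] V where
  toFun := TensorProduct.map Complex.conjAe.toLinearMap LinearMap.id
  map_add' := map_add _
  map_smul' c u := by
    induction u using TensorProduct.induction_on with
    | zero => simp
    | tmul d v => simp [TensorProduct.smul_tmul']
    | add x y hx hy => simp_all

@[simp]
lemma conj_tmul (c : ℂ) (v : V) : conj (c ⊗ₜ[ℝ] v) = starRingEnd ℂ c ⊗ₜ[ℝ] v := rfl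

lemma commute_conj_baseChange (D : V →ₗ[ℝ] V) :
    Function.Commute (conj : ℂ ⊗[ℝ] V → _) (D.baseChange ℂ) := by
  intro u
  induction u using TensorProduct.induction_on with
  | zero => simp
  | tmul c v => simp
  | add x y hx hy => simp_all

lemma one_tmul_re (u : ℂ ⊗[ℝ] V) :
    (1 : ℂ) ⊗ₜ[ℝ] re u = (2⁻¹ : ℝ) • (u + conj u) := by
  induction u using TensorProduct.induction_on with
  | zero => simp
  | tmul c v =>
    rw [re_tmul, conj_tmul, ← TensorProduct.add_tmul, Complex.add_conj,
      TensorProduct.smul_tmul', TensorProduct.tmul_smul, TensorProduct.smul_tmul']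
    congr 1
    simp [Complex.real_smul]
  | add x y hx hy =>
    rw [map_add, TensorProduct.tmul_add, hx, hy, map_add, ← smul_add, add_add_add_comm]

end Complexification

open Complexification

noncomputable def complexSpectralSubmodule {V : Type*} [AddCommGroup V] [Module ℝ V]
    (D : V →ₗ[ℝ] V) (P : ℂ → Prop) : Submodule ℂ (ℂ ⊗[ℝ] V) :=
  ⨆ α ∈ {α : ℂ | P α}, maxGenEigenspace (D.baseChange ℂ) α

section Spectral

variable {V W : Type*} [AddCommGroup V] [Module ℝ V] [AddCommGroup W] [Module ℝ W]
  {P : ℂ → Prop}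

lemma mem_spectralSubmodule_iff_s5 {D : V →ₗ[ℝ] V} {v : V} :
    v ∈ spectralSubmodule D P ↔ (1 : ℂ) ⊗ₜ[ℝ] v ∈ complexSpectralSubmodule D P :=
  Iff.rfl

lemma conj_mem_complexSpectralSubmodule (hP : ∀ α, P α → P (starRingEnd ℂ α))
    {D : V →ₗ[ℝ] V} {u : ℂ ⊗[ℝ] V} (hu : u ∈ complexSpectralSubmodule D P) :
    conj u ∈ complexSpectralSubmodule D P := by
  have hle : complexSpectralSubmodule D P ≤ (complexSpectralSubmodule D P).comap conj :=
    iSup₂_le fun α hα _ hx =>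
      Submodule.mem_iSup_of_mem (starRingEnd ℂ α) <| Submodule.mem_iSup_of_mem (hP α hα) <|
        apply_mem_maxGenEigenspace_of_semiconj conj (commute_conj_baseChange D) hx
  exact hle hu

lemma map_complexSpectralSubmodule_of_semiconj [FiniteDimensional ℝ V] (f : V →ₗ[ℝ] W)
    (hf : Surjective f) {D₁ : V →ₗ[ℝ] V} {D₂ : W →ₗ[ℝ] W} (h : Semiconj f D₁ D₂) :
    (complexSpectralSubmodule D₁ P).map (f.baseChange ℂ) = complexSpectralSubmodule D₂ P := by
  have hF : Surjective (f.baseChange ℂ) := by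
    rw [LinearMap.baseChange_eq_ltensor]
    exact LinearMap.lTensor_surjective ℂ hf
  simp only [complexSpectralSubmodule, Submodule.map_iSup,
    map_maxGenEigenspace_of_semiconj _ hF (LinearMap.semiconj_baseChange h)]

theorem map_spectralSubmodule_of_semiconj [FiniteDimensional ℝ V] (f : V →ₗ[ℝ] W)
    (hf : Surjective f) {D₁ : V →ₗ[ℝ] V} {D₂ : W →ₗ[ℝ] W} (h : Semiconj f D₁ D₂)
    (hP : ∀ α, P α → P (starRingEnd ℂ α)) :
    (spectralSubmodule D₁ P).map f = spectralSubmodule D₂ P := by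
  have hmap := map_complexSpectralSubmodule_of_semiconj (P := P) f hf h
  ext w
  simp only [Submodule.mem_map, mem_spectralSubmodule_iff_s5]
  constructor
  · rintro ⟨v, hv, rfl⟩
    exact hmap ▸ ⟨_, hv, LinearMap.baseChange_tmul f 1 v⟩
  · intro hw
    obtain ⟨u, hu, hfu⟩ := hmap ▸ hw
    refine ⟨re u, ?_, ?_⟩
    · rw [one_tmul_re]
      exact Submodule.smul_of_tower_mem _ _ (add_mem hu (conj_mem_complexSpectralSubmodule hP hu))
    · rw [← re_baseChange, hfu, re_tmul, Complex.one_re, one_smul]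

end Spectral

theorem map_spectralSubmodule_of_surjective_general
    {L : Type*} [LieRing L] [LieAlgebra ℝ L] [FiniteDimensional ℝ L]
    {M : Type*} [LieRing M] [LieAlgebra ℝ M]
    (π : L →ₗ⁅ℝ⁆ M) (hπ : Function.Surjective π)
    (D₁ : LieDerivation ℝ L L) (D₂ : LieDerivation ℝ M M)
    (h : ∀ x : L, π (D₁ x) = D₂ (π x)) :
    Submodule.map (π : L →ₗ[ℝ] M) (spectralSubmodule (D₁ : L →ₗ[ℝ] L) (fun α => 0 < α.re)) =
        spectralSubmodule (D₂ : M →ₗ[ℝ] M) (fun α => 0 < α.re) ∧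
      Submodule.map (π : L →ₗ[ℝ] M) (spectralSubmodule (D₁ : L →ₗ[ℝ] L) (fun α => α.re < 0)) =
        spectralSubmodule (D₂ : M →ₗ[ℝ] M) (fun α => α.re < 0) ∧
      Submodule.map (π : L →ₗ[ℝ] M) (spectralSubmodule (D₁ : L →ₗ[ℝ] L) (fun α => α.re = 0)) =
        spectralSubmodule (D₂ : M →ₗ[ℝ] M) (fun α => α.re = 0) :=
  ⟨map_spectralSubmodule_of_semiconj π.toLinearMap hπ h fun _ => by simp,
    map_spectralSubmodule_of_semiconj π.toLinearMap hπ h fun _ => by simp,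
    map_spectralSubmodule_of_semiconj π.toLinearMap hπ h fun _ => by simp⟩

/-- For a surjective homomorphism `π : 𝔤 → 𝔥` of finite-dimensional real Lie
algebras intertwining derivations `D₁` and `D₂`, one has `π(𝔤⁺) = 𝔥⁺`, `π(𝔤⁻) = 𝔥⁻` and
`π(𝔤⁰) = 𝔥⁰`. -/
theorem map_spectralSubmodule_of_surjective
    {L : Type*} [LieRing L] [LieAlgebra ℝ L] [FiniteDimensional ℝ L]
    {M : Type*} [LieRing M] [LieAlgebra ℝ M] [FiniteDimensional ℝ M]
    (π : L →ₗ⁅ℝ⁆ M) (hπ : Function.Surjective π)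
    (D₁ : LieDerivation ℝ L L) (D₂ : LieDerivation ℝ M M)
    (h : ∀ x : L, π (D₁ x) = D₂ (π x)) :
    Submodule.map (π : L →ₗ[ℝ] M) (spectralSubmodule (D₁ : L →ₗ[ℝ] L) (fun α => 0 < α.re)) =
        spectralSubmodule (D₂ : M →ₗ[ℝ] M) (fun α => 0 < α.re) ∧
      Submodule.map (π : L →ₗ[ℝ] M) (spectralSubmodule (D₁ : L →ₗ[ℝ] L) (fun α => α.re < 0)) =
        spectralSubmodule (D₂ : M →ₗ[ℝ] M) (fun α => α.re < 0) ∧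
      Submodule.map (π : L →ₗ[ℝ] M) (spectralSubmodule (D₁ : L →ₗ[ℝ] L) (fun α => α.re = 0)) =
        spectralSubmodule (D₂ : M →ₗ[ℝ] M) (fun α => α.re = 0) :=
  map_spectralSubmodule_of_surjective_general π hπ D₁ D₂ h
end

section
/- Consider the linear control system ẋ = Ax + Bu on ℝ^d with A ∈ ℝ^{d×d}, B ∈ ℝ^{d×m}, and controls u taking values in a compact convex set Ω ⊆ ℝ^m with 0 in its interior. If the system is controllable (every point reachable from every point), then all eigenvalues of A have zero real part. -/
/-!
If `Re α > 0`, pair a trajectory with a left eigenvector `v` of `A` for `α`: then `y = v ⬝ᵥ x`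
solves `y' = α y + v ⬝ᵥ B u` with forcing bounded by some `C`, and comparing with
`e^{αt}` shows that a solution reaching `0` must start in the disc of radius `C / Re α`.
Starting outside it, the origin is unreachable. Reversing time turns a controllable system
`(A, B)` into the controllable system `(-A, -B)`, which rules out `Re α < 0` as well.
-/

open Matrix Module.End Set

namespace Matrix

variable {R n : Type*} [CommRing R] [IsDomain R] [Fintype n] [DecidableEq n]

theorem hasEigenvalue_mulVecLin_transpose_iff {M : Matrix n n R} {μ : R} :
    HasEigenvalue Mᵀ.mulVecLin μ ↔ HasEigenvalue M.mulVecLin μ := by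
  simp only [hasEigenvalue_iff_isRoot_charpoly, charpoly_mulVecLin, charpoly_transpose]

theorem exists_vecMul_eq_smul_of_hasEigenvalue {M : Matrix n n R} {μ : R}
    (h : HasEigenvalue M.mulVecLin μ) : ∃ v ≠ 0, v ᵥ* M = μ • v := by
  obtain ⟨v, hv, hv0⟩ := (hasEigenvalue_mulVecLin_transpose_iff.mpr h).exists_hasEigenvector
  exact ⟨v, hv0, by simpa [← mulVec_transpose] using mem_eigenspace_iff.mp hv⟩

end Matrix

section ComplexFunctional

variable {ι : Type*} [Fintype ι]

noncomputable def dotProductOfRealCLM (v : ι → ℂ) : (ι → ℝ) →L[ℝ] ℂ :=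
  ∑ i, v i • Complex.ofRealCLM.comp (ContinuousLinearMap.proj i)

@[simp]
theorem dotProductOfRealCLM_apply (v : ι → ℂ) (p : ι → ℝ) :
    dotProductOfRealCLM v p = v ⬝ᵥ (Complex.ofReal ∘ p) := by
  simp [dotProductOfRealCLM, dotProduct]

theorem dotProductOfRealCLM_mulVec {v : ι → ℂ} {A : Matrix ι ι ℝ} {α : ℂ}
    (hv : v ᵥ* A.map Complex.ofReal = α • v) (p : ι → ℝ) :
    dotProductOfRealCLM v (A *ᵥ p) = α * dotProductOfRealCLM v p := by
  have hcomm : Complex.ofReal ∘ (A *ᵥ p) = A.map Complex.ofReal *ᵥ (Complex.ofReal ∘ p) :=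
    funext (RingHom.map_mulVec Complex.ofRealHom A p)
  rw [dotProductOfRealCLM_apply, dotProductOfRealCLM_apply, hcomm, dotProduct_mulVec, hv,
    smul_dotProduct, smul_eq_mul]

theorem exists_lt_norm_dotProductOfRealCLM {v : ι → ℂ} (hv : v ≠ 0) (c : ℝ) :
    ∃ p, c < ‖dotProductOfRealCLM v p‖ := by
  classical
  obtain ⟨i, hi⟩ := Function.ne_iff.mp hv
  have hvi : 0 < ‖v i‖ := norm_pos_iff.mpr hi
  refine ⟨Pi.single i ((|c| + 1) / ‖v i‖), ?_⟩
  have hs : 0 < (|c| + 1) / ‖v i‖ := by positivity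
  have : dotProductOfRealCLM v (Pi.single i ((|c| + 1) / ‖v i‖)) =
      v i * ((|c| + 1) / ‖v i‖ : ℝ) := by
    simp [dotProduct, Pi.single_apply, apply_ite Complex.ofReal]
  rw [this, norm_mul, Complex.norm_real, Real.norm_of_nonneg hs.le, mul_div_cancel₀ _ hvi.ne']
  linarith [le_abs_self c]

end ComplexFunctional

section ScalarBound

variable {E : Type*} [NormedAddCommGroup E] [NormedSpace ℂ E]

theorem norm_apply_zero_le_of_hasDerivAt_smul_add {y g : ℝ → E} {α : ℂ} {C T : ℝ}
    (hα : 0 < α.re) (hT : 0 ≤ T) (hy : ∀ t ∈ Icc 0 T, HasDerivAt y (α • y t + g t) t)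
    (hg : ∀ t ∈ Ico 0 T, ‖g t‖ ≤ C) :
    ‖y 0‖ ≤ Real.exp (-(α.re * T)) * ‖y T‖ + C / α.re * (1 - Real.exp (-(α.re * T))) := by
  set r := α.re
  have norm_exp (t : ℝ) : ‖Complex.exp (-(α * t))‖ = Real.exp (-(r * t)) := by
    simp [Complex.norm_exp, r]
  set z : ℝ → E := fun t => Complex.exp (-(α * t)) • y t
  have hz : ∀ t ∈ Icc 0 T, HasDerivAt z (Complex.exp (-(α * t)) • g t) t := by
    intro t ht
    have hexp : HasDerivAt (fun t : ℝ => Complex.exp (-(α * t)))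
        (Complex.exp (-(α * t)) * -α) t := by
      simpa using ((hasDerivAt_id t).ofReal_comp.const_mul α).neg.cexp
    refine (hexp.smul (hy t ht)).congr_deriv ?_
    module
  -- `z' = e^{-αt} g` has norm at most `C e^{-rt}`, whose integral over `[0, ∞)` is `C / r`
  have hbound : ‖z T - z 0‖ ≤ C / r - C / r * Real.exp (-(r * T)) := by
    refine image_norm_le_of_norm_deriv_right_le_deriv_boundary (f := fun t => z t - z 0)
      (B := fun t => C / r - C / r * Real.exp (-(r * t)))
      (B' := fun t => C * Real.exp (-(r * t)))
      (fun t ht => ((hz t ht).continuousAt.sub continuousAt_const).continuousWithinAt)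
      (fun t ht => ((hz t (Ico_subset_Icc_self ht)).sub_const _).hasDerivWithinAt)
      (by simp) (fun t => ?_) (fun t ht => ?_) (right_mem_Icc.mpr hT)
    · have := (((hasDerivAt_id t).const_mul r).neg.exp.const_mul (C / r)).const_sub (C / r)
      refine this.congr_deriv ?_
      field_simp
      simp
    · rw [norm_smul, norm_exp, mul_comm]
      exact mul_le_mul_of_nonneg_right (hg t ht) (Real.exp_nonneg _)
  calc ‖y 0‖ = ‖z 0‖ := by simp [z]
    _ ≤ ‖z T‖ + ‖z T - z 0‖ := by rw [norm_sub_rev]; exact norm_le_norm_add_norm_sub' _ _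
    _ ≤ Real.exp (-(r * T)) * ‖y T‖ + C / r * (1 - Real.exp (-(r * T))) := by
        rw [norm_smul, norm_exp]
        linarith

end ScalarBound

section LinearControl

variable {ι κ : Type*} [Fintype ι] [Fintype κ]

def IsControllable (A : Matrix ι ι ℝ) (B : Matrix ι κ ℝ) (Ω : Set (κ → ℝ)) : Prop :=
  ∀ p q : ι → ℝ, ∃ T > (0 : ℝ), ∃ u : ℝ → (κ → ℝ),
    Measurable u ∧ (∀ t : ℝ, u t ∈ Ω) ∧ ∃ x : ℝ → (ι → ℝ), x 0 = p ∧ x T = q ∧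
      ∀ t ∈ Set.Icc (0 : ℝ) T, HasDerivAt x (A.mulVec (x t) + B.mulVec (u t)) t

variable {A : Matrix ι ι ℝ} {B : Matrix ι κ ℝ} {Ω : Set (κ → ℝ)}

theorem IsControllable.neg (h : IsControllable A B Ω) : IsControllable (-A) (-B) Ω := by
  intro p q
  obtain ⟨T, hT, u, hu, huΩ, x, hx0, hxT, hx⟩ := h q p
  refine ⟨T, hT, fun t => u (T - t), hu.comp (measurable_const.sub measurable_id),
    fun t => huΩ _, fun t => x (T - t), by simpa using hxT, by simpa using hx0, fun t ht => ?_⟩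
  have hmem : T - t ∈ Icc 0 T := ⟨by linarith [ht.2], by linarith [ht.1]⟩
  refine ((hx (T - t) hmem).scomp t ((hasDerivAt_id t).const_sub T)).congr_deriv ?_
  simp [neg_mulVec]

theorem re_nonpos_of_isControllable (hΩ : Bornology.IsBounded Ω) (hc : IsControllable A B Ω)
    {α : ℂ} (hα : HasEigenvalue (A.map Complex.ofReal).mulVecLin α) : α.re ≤ 0 := by
  classical
  by_contra! hr
  obtain ⟨v, hv0, hv⟩ := exists_vecMul_eq_smul_of_hasEigenvalue hα
  obtain ⟨C, hC0, hC⟩ := (((dotProductOfRealCLM v).comp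
    B.mulVecLin.toContinuousLinearMap).lipschitz.isBounded_image hΩ).exists_pos_norm_le
  obtain ⟨p, hp⟩ := exists_lt_norm_dotProductOfRealCLM hv0 (C / α.re)
  obtain ⟨T, hT, u, -, hu, x, rfl, hxT, hx⟩ := hc p 0
  set ℓ := dotProductOfRealCLM v
  have hy : ∀ t ∈ Icc 0 T, HasDerivAt (ℓ ∘ x) (α • ℓ (x t) + ℓ (B *ᵥ u t)) t := fun t ht => by
    refine (ℓ.hasFDerivAt.comp_hasDerivAt t (hx t ht)).congr_deriv ?_
    rw [map_add, dotProductOfRealCLM_mulVec hv, smul_eq_mul]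
  have hbound := norm_apply_zero_le_of_hasDerivAt_smul_add hr hT.le hy
    (fun t _ => hC _ (mem_image_of_mem _ (hu t)))
  have : C / α.re * (1 - Real.exp (-(α.re * T))) ≤ C / α.re :=
    mul_le_of_le_one_right (by positivity) (by linarith [Real.exp_pos (-(α.re * T))])
  simp only [Function.comp_apply, hxT, map_zero, norm_zero, mul_zero, zero_add] at hbound
  linarith

end LinearControl

theorem eigenvalues_re_eq_zero_of_controllable_general {d m : ℕ}
    (A : Matrix (Fin d) (Fin d) ℝ) (B : Matrix (Fin d) (Fin m) ℝ)
    (Ω : Set (Fin m → ℝ)) (hΩc : IsCompact Ω)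
    (hcontrollable : ∀ p q : Fin d → ℝ, ∃ T > (0 : ℝ), ∃ u : ℝ → (Fin m → ℝ),
      Measurable u ∧ (∀ t : ℝ, u t ∈ Ω) ∧ ∃ x : ℝ → (Fin d → ℝ), x 0 = p ∧ x T = q ∧
        ∀ t ∈ Set.Icc (0 : ℝ) T, HasDerivAt x (A.mulVec (x t) + B.mulVec (u t)) t)
    (α : ℂ)
    (hα : Module.End.HasEigenvalue (Matrix.mulVecLin (A.map (Complex.ofReal))) α) :
    α.re = 0 := by
  have hα_neg : HasEigenvalue ((-A).map Complex.ofReal).mulVecLin (-α) := by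
    have : ((-A).map Complex.ofReal).mulVecLin = -(A.map Complex.ofReal).mulVecLin := by
      ext; simp
    rwa [this, hasEigenvalue_neg_iff, neg_neg]
  have h_le := re_nonpos_of_isControllable hΩc.isBounded hcontrollable hα
  have h_ge :=
    re_nonpos_of_isControllable hΩc.isBounded (IsControllable.neg hcontrollable) hα_neg
  rw [Complex.neg_re] at h_ge
  linarith

/-- If the linear control system `ẋ = Ax + Bu` on `ℝ^d`, with controls
taking values in a compact convex set `Ω ⊆ ℝ^m` having `0` in its interior, is controllable,
then all (complex) eigenvalues of `A` have zero real part. -/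
theorem eigenvalues_re_eq_zero_of_controllable {d m : ℕ}
    (A : Matrix (Fin d) (Fin d) ℝ) (B : Matrix (Fin d) (Fin m) ℝ)
    (Ω : Set (Fin m → ℝ)) (hΩc : IsCompact Ω) (hΩconv : Convex ℝ Ω)
    (hΩ0 : 0 ∈ interior Ω)
    (hcontrollable : ∀ p q : Fin d → ℝ, ∃ T > (0 : ℝ), ∃ u : ℝ → (Fin m → ℝ),
      Measurable u ∧ (∀ t : ℝ, u t ∈ Ω) ∧ ∃ x : ℝ → (Fin d → ℝ), x 0 = p ∧ x T = q ∧
        ∀ t ∈ Set.Icc (0 : ℝ) T, HasDerivAt x (A.mulVec (x t) + B.mulVec (u t)) t)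
    (α : ℂ)
    (hα : Module.End.HasEigenvalue (Matrix.mulVecLin (A.map (Complex.ofReal))) α) :
    α.re = 0 :=
  eigenvalues_re_eq_zero_of_controllable_general A B Ω hΩc hcontrollable α hα
end
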